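/- Let (A,V) and (B,W) be permutation groups, both different from I₁ (that is, |V| ≥ 2 and |W| ≥ 2). Then the direct product A × B belongs to GR if and only if none of the following three cases holds: (i) A ∉ DGR or B ∉ DGR; (ii) one of the two groups belongs to GR and has all its Or-orbitals self-paired, while the other does not belong to GR ∪ {I₂}; (iii) A, B ∈ DGR \ (GR ∪ {I₂}) and there exist a ∈ Ā \ A which pairs all the pairs of paired Or-orbitals of A and b ∈ B̄ \ B which pairs all the pairs of paired Or-orbitals of B. -/

import Mathlib

/-- A permutation `σ` is an automorphism of the edge-colored graph on `V`
with edge-color function `E`. -/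
def IsGraphAut {V C : Type} (E : Sym2 V → C) (σ : Equiv.Perm V) : Prop :=
  ∀ v w : V, v ≠ w → E s(σ v, σ w) = E s(v, w)

/-- A permutation `σ` is an automorphism of the edge-colored digraph on `V`
with edge-color function `E`. -/
def IsDigraphAut {V C : Type} (E : V × V → C) (σ : Equiv.Perm V) : Prop :=
  ∀ v w : V, v ≠ w → E (σ v, σ w) = E (v, w)

/-- A permutation group `(A, V)` belongs to the class `GR` iff it is the
automorphism group of an edge-colored graph on `V`. -/
def IsGR {V : Type} (A : Subgroup (Equiv.Perm V)) : Prop :=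
  ∃ (C : Type) (E : Sym2 V → C), ∀ σ : Equiv.Perm V, σ ∈ A ↔ IsGraphAut E σ

/-- A permutation group `(A, V)` belongs to the class `DGR` iff it is the
automorphism group of an edge-colored digraph on `V`. -/
def IsDGR {V : Type} (A : Subgroup (Equiv.Perm V)) : Prop :=
  ∃ (C : Type) (E : V × V → C), ∀ σ : Equiv.Perm V, σ ∈ A ↔ IsDigraphAut E σ

/-- The product-action homomorphism `Perm V × Perm W →* Perm (V × W)`,
`(a, b) (x, y) = (a x, b y)`. -/
def permProdHom (V W : Type) : Equiv.Perm V × Equiv.Perm W →* Equiv.Perm (V × W) where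
  toFun p := Equiv.prodCongr p.1 p.2
  map_one' := Equiv.ext fun _ => rfl
  map_mul' _ _ := Equiv.ext fun _ => rfl

/-- The direct product of the permutation groups `(A, V)` and `(B, W)`,
acting on `V × W` with the product action. -/
def PermProd {V W : Type} (A : Subgroup (Equiv.Perm V)) (B : Subgroup (Equiv.Perm W)) :
    Subgroup (Equiv.Perm (V × W)) :=
  (A.prod B).map (permProdHom V W)

/-- The Or-orbital of the ordered pair `(v₁, v₂)` under `A`. -/
def Orbital {V : Type} (A : Subgroup (Equiv.Perm V)) (v₁ v₂ : V) : Set (V × V) :=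
  {p | ∃ a ∈ A, p = (a v₁, a v₂)}

/-- The Or-orbital of `(v₁, v₂)` is self-paired: it coincides with the orbital
consisting of the reversed pairs. -/
def SelfPaired {V : Type} (A : Subgroup (Equiv.Perm V)) (v₁ v₂ : V) : Prop :=
  Orbital A v₁ v₂ = Orbital A v₂ v₁

/-- The orbit of `v` under the permutation group `A`. -/
def OrbitOf {V : Type} (A : Subgroup (Equiv.Perm V)) (v : V) : Set V :=
  {x | ∃ a ∈ A, x = a v}

/-- `σ` maps every NOr-orbital (orbit on unordered pairs of distinct elements)
of `A` onto itself. -/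
def PreservesNOrOrbitals {V : Type} (A : Subgroup (Equiv.Perm V)) (σ : Equiv.Perm V) : Prop :=
  ∀ v w : V, v ≠ w → ∃ a ∈ A, s(σ v, σ w) = s(a v, a w)

/-- `σ` maps every Or-orbital (orbit on ordered pairs of distinct elements)
of `A` onto itself. -/
def PreservesOrOrbitals {V : Type} (A : Subgroup (Equiv.Perm V)) (σ : Equiv.Perm V) : Prop :=
  ∀ v w : V, v ≠ w → ∃ a ∈ A, σ v = a v ∧ σ w = a w

/-- `Ā`: the set of all permutations of `V` mapping every NOr-orbital of `A`
onto itself (the smallest group in `GR` containing `A`). -/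
def grClosure {V : Type} (A : Subgroup (Equiv.Perm V)) : Set (Equiv.Perm V) :=
  {σ | PreservesNOrOrbitals A σ}

/-- `σ` pairs all the pairs of paired Or-orbitals of `A`: for every
non-self-paired Or-orbital `O`, the image of `O` under `σ` is the paired
orbital `O*`. -/
def PairsAllPairedOrbitals {V : Type} (A : Subgroup (Equiv.Perm V)) (σ : Equiv.Perm V) : Prop :=
  ∀ v₁ v₂ : V, v₁ ≠ v₂ → ¬ SelfPaired A v₁ v₂ →
    (fun p : V × V => (σ p.1, σ p.2)) '' Orbital A v₁ v₂ = Orbital A v₂ v₁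

/-- The permutation group `(A, V)` is the group `I₂`: the trivial group acting
on a two-element set. -/
def IsI₂ {V : Type} [Fintype V] (A : Subgroup (Equiv.Perm V)) : Prop :=
  Fintype.card V = 2 ∧ A = ⊥

/-!
A permutation of `V × W` preserving every NOr-orbital of `A × B` has the form `f × g`, and `f × g`
does so exactly when, on every pair of points, `f` and `g` both preserve or both reverse the
Or-orbitals of the coordinates. Hence `A × B ∈ GR` iff every such coherent pair lies in `A × B`.
The three exceptional cases are exactly the ways to build a coherent pair outside `A × B`:
`f × 1` with `f` in the 2-closure of `A` but not in `A`; `1 × g` with `g ∈ B̄ \ B` when all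
Or-orbitals of `A` are self-paired (then `1` reverses them); and `f × g` with both reversing all
Or-orbitals. Conversely, if `g` fails to preserve some Or-orbital of `B`, coherence forces `f` to
reverse all Or-orbitals of `A`, which lands in case (ii) when `f ∈ A` and in case (iii) otherwise.
Excluding `GR ∪ {I₂}` guarantees `|V| ≥ 3`, which makes every element of `Ā` preserve each orbit
of `A`.
-/

open Equiv

section Orbitals

variable {V : Type} {A : Subgroup (Perm V)} {σ : Perm V}

lemma apply_mem_orbital {a : Perm V} (ha : a ∈ A) (v w : V) : (a v, a w) ∈ Orbital A v w :=
  ⟨a, ha, rfl⟩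

lemma mem_orbital_self (v w : V) : (v, w) ∈ Orbital A v w :=
  apply_mem_orbital A.one_mem v w

lemma orbital_eq_of_mem {p : V × V} {v w : V} (hp : p ∈ Orbital A v w) :
    Orbital A p.1 p.2 = Orbital A v w := by
  obtain ⟨a, ha, rfl⟩ := hp
  ext q
  constructor
  · rintro ⟨c, hc, rfl⟩
    exact ⟨c * a, A.mul_mem hc ha, rfl⟩
  · rintro ⟨c, hc, rfl⟩
    exact ⟨c * a⁻¹, A.mul_mem hc (A.inv_mem ha), by simp⟩

lemma mk_self_mem_orbital_iff {x v : V} : (x, x) ∈ Orbital A v v ↔ x ∈ OrbitOf A v := by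
  simp [Orbital, OrbitOf]

lemma selfPaired_of_mem_orbital_swap (hσ : σ ∈ A) {v w : V}
    (h : (σ v, σ w) ∈ Orbital A w v) : SelfPaired A v w :=
  (orbital_eq_of_mem (apply_mem_orbital hσ v w)).symm.trans (orbital_eq_of_mem h)

lemma preservesOrOrbitals_iff :
    PreservesOrOrbitals A σ ↔ ∀ v w, v ≠ w → (σ v, σ w) ∈ Orbital A v w := by
  simp [PreservesOrOrbitals, Orbital]

lemma preservesOrOrbitals_of_mem (hσ : σ ∈ A) : PreservesOrOrbitals A σ :=
  fun _ _ _ => ⟨σ, hσ, rfl, rfl⟩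

lemma PreservesOrOrbitals.mem_orbital [Nontrivial V] (hσ : PreservesOrOrbitals A σ) (v w : V) :
    (σ v, σ w) ∈ Orbital A v w := by
  obtain rfl | hvw := eq_or_ne v w
  · obtain ⟨x, hx⟩ := exists_ne v
    obtain ⟨a, ha, hav, -⟩ := hσ v x hx.symm
    exact ⟨a, ha, by rw [hav]⟩
  · exact preservesOrOrbitals_iff.mp hσ v w hvw

def ReversesOrOrbitals (A : Subgroup (Perm V)) (σ : Perm V) : Prop :=
  ∀ v w, v ≠ w → (σ v, σ w) ∈ Orbital A w v

lemma ReversesOrOrbitals.mem_orbital (hσ : ReversesOrOrbitals A σ)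
    (hσ_orbit : ∀ v, σ v ∈ OrbitOf A v) (v w : V) : (σ v, σ w) ∈ Orbital A w v := by
  obtain rfl | hvw := eq_or_ne v w
  · exact mk_self_mem_orbital_iff.mpr (hσ_orbit v)
  · exact hσ v w hvw

lemma mem_grClosure_iff : σ ∈ grClosure A ↔
    ∀ v w, v ≠ w → (σ v, σ w) ∈ Orbital A v w ∨ (σ v, σ w) ∈ Orbital A w v := by
  simp [grClosure, PreservesNOrOrbitals, Orbital, and_or_left, exists_or]

lemma isGR_iff : IsGR A ↔ grClosure A ⊆ A := by
  constructor
  · rintro ⟨C, E, hE⟩ σ hσ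
    refine (hE σ).mpr fun v w hvw => ?_
    obtain ⟨a, ha, heq⟩ := hσ v w hvw
    rw [heq]
    exact (hE a).mp ha v w hvw
  · intro h
    refine ⟨Set (Sym2 V), fun e => {e' | ∃ a ∈ A, e' = e.map a}, fun σ => ⟨?_, fun hσ => h ?_⟩⟩
    · intro hσ v w _
      ext e
      simp only [Set.mem_ofPred_eq, Sym2.map_mk]
      constructor
      · rintro ⟨a, ha, rfl⟩
        exact ⟨a * σ, A.mul_mem ha hσ, rfl⟩
      · rintro ⟨a, ha, rfl⟩
        exact ⟨a * σ⁻¹, A.mul_mem ha (A.inv_mem hσ), by simp⟩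
    · intro v w hvw
      have hcolor : {e | ∃ a ∈ A, e = s(σ v, σ w).map a} = {e | ∃ a ∈ A, e = s(v, w).map a} :=
        hσ v w hvw
      have hmem : s(σ v, σ w) ∈ {e | ∃ a ∈ A, e = s(σ v, σ w).map a} := ⟨1, A.one_mem, by simp⟩
      rw [hcolor] at hmem
      exact hmem

lemma isDGR_iff : IsDGR A ↔ ∀ σ, PreservesOrOrbitals A σ → σ ∈ A := by
  constructor
  · rintro ⟨C, E, hE⟩ σ hσ
    refine (hE σ).mpr fun v w hvw => ?_
    obtain ⟨a, ha, h₁, h₂⟩ := hσ v w hvw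
    rw [h₁, h₂]
    exact (hE a).mp ha v w hvw
  · intro h
    refine ⟨Set (V × V), fun p => Orbital A p.1 p.2, fun σ => ⟨?_, fun hσ => h σ ?_⟩⟩
    · intro hσ v w _
      exact orbital_eq_of_mem (apply_mem_orbital hσ v w)
    · refine preservesOrOrbitals_iff.mpr fun v w hvw => ?_
      have hcolor : Orbital A (σ v) (σ w) = Orbital A v w := hσ v w hvw
      exact hcolor ▸ mem_orbital_self _ _

lemma not_isGR_of_mem_grClosure (hσ : σ ∈ grClosure A) (hσA : σ ∉ A) : ¬ IsGR A :=
  fun h => hσA (isGR_iff.mp h hσ)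

lemma isGR_of_isDGR_of_selfPaired (hA : IsDGR A)
    (hsp : ∀ v w : V, v ≠ w → SelfPaired A v w) : IsGR A := by
  refine isGR_iff.mpr fun σ hσ => isDGR_iff.mp hA σ (preservesOrOrbitals_iff.mpr fun v w hvw => ?_)
  rcases mem_grClosure_iff.mp hσ v w hvw with h | h
  · exact h
  · rwa [hsp v w hvw]

lemma reversesOrOrbitals_iff_pairsAllPairedOrbitals [Finite V] (hσ : σ ∈ grClosure A) :
    ReversesOrOrbitals A σ ↔ PairsAllPairedOrbitals A σ := by
  set F : V × V → V × V := fun p => (σ p.1, σ p.2)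
  have hF : Function.Injective F := fun p q h =>
    Prod.ext (σ.injective (congrArg Prod.fst h)) (σ.injective (congrArg Prod.snd h))
  constructor
  · intro hrev v w _ _
    have maps_to : ∀ {x y : V}, x ≠ y → ∀ p ∈ Orbital A x y, F p ∈ Orbital A y x := by
      rintro x y hxy _ ⟨a, ha, rfl⟩
      rw [← orbital_eq_of_mem (apply_mem_orbital ha y x)]
      exact hrev _ _ (a.injective.ne hxy)
    refine Set.eq_of_subset_of_ncard_le (Set.image_subset_iff.mpr (maps_to ‹_›)) ?_
    rw [Set.ncard_image_of_injective _ hF]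
    exact Set.ncard_le_ncard_of_injOn F (maps_to (Ne.symm ‹_›)) hF.injOn
  · intro hpairs v w hvw
    by_cases hsp : SelfPaired A v w
    · rcases mem_grClosure_iff.mp hσ v w hvw with h | h
      · rwa [← hsp]
      · exact h
    · rw [← hpairs v w hvw hsp]
      exact ⟨(v, w), mem_orbital_self v w, rfl⟩

lemma mem_orbitOf_of_mem_grClosure [Fintype V] (hcard : 3 ≤ Fintype.card V)
    (hσ : σ ∈ grClosure A) (v : V) : σ v ∈ OrbitOf A v := by
  by_contra hv
  have cross : ∀ x, x ≠ v → ∃ a ∈ A, σ v = a x ∧ σ x = a v := by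
    intro x hx
    rcases mem_grClosure_iff.mp hσ v x hx.symm with ⟨a, ha, h⟩ | ⟨a, ha, h⟩
    · exact absurd ⟨a, ha, congrArg Prod.fst h⟩ hv
    · exact ⟨a, ha, congrArg Prod.fst h, congrArg Prod.snd h⟩
  -- `σ v ∉ A v` forces `σ v ∈ A x` and `σ x ∈ A v` for all `x ≠ v`; but for `y ∉ {v, x}` the
  -- pair `(x, y)` puts `σ x` into `A x` or `A y`, orbits that also contain `σ v`.
  have mem_orbit : ∀ {a b c : Perm V}, a ∈ A → b ∈ A → c ∈ A → ∀ {z : V},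
      σ v = c z → b z = a v → σ v ∈ OrbitOf A v := by
    intro a b c ha hb hc z hcz hbz
    refine ⟨c * b⁻¹ * a, A.mul_mem (A.mul_mem hc (A.inv_mem hb)) ha, ?_⟩
    simp [hcz, ← hbz]
  obtain ⟨x, y, hxv, hyv, hxy⟩ : ∃ x y : V, x ≠ v ∧ y ≠ v ∧ x ≠ y := by
    classical
    obtain ⟨x, hx, y, hy, hxy⟩ := Finset.one_lt_card.mp
      (show 1 < (Finset.univ.erase v).card by rw [Finset.card_erase_of_mem (by simp)]; simp; omega)
    exact ⟨x, y, Finset.ne_of_mem_erase hx, Finset.ne_of_mem_erase hy, hxy⟩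
  obtain ⟨a, ha, hax, hxa⟩ := cross x hxv
  obtain ⟨a', ha', hay, -⟩ := cross y hyv
  rcases mem_grClosure_iff.mp hσ x y hxy with ⟨b, hb, h⟩ | ⟨b, hb, h⟩
  · exact hv (mem_orbit ha hb ha hax (hxa ▸ congrArg Prod.fst h).symm)
  · exact hv (mem_orbit ha hb ha' hay (hxa ▸ congrArg Prod.fst h).symm)

lemma three_le_card_of_not_isGR [Fintype V] (hV : 2 ≤ Fintype.card V)
    (hGR : ¬ IsGR A) (hI : ¬ IsI₂ A) : 3 ≤ Fintype.card V := by
  by_contra! hlt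
  have hcard : Fintype.card V = 2 := by omega
  have hprime : (Nat.card (Perm V)).Prime := by
    rw [Nat.card_perm, Nat.card_eq_fintype_card, hcard]
    exact Nat.prime_two
  have := Fact.mk hprime
  rcases Subgroup.eq_bot_or_eq_top_of_prime_card A with rfl | rfl
  · exact hI ⟨hcard, rfl⟩
  · exact hGR (isGR_iff.mpr fun σ _ => Subgroup.mem_top σ)

lemma not_isI₂_of_mem_orbitOf [Fintype V] (hσ : ∀ v, σ v ∈ OrbitOf A v) (hσA : σ ∉ A) :
    ¬ IsI₂ A := by
  rintro ⟨-, rfl⟩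
  refine hσA (Subgroup.mem_bot.mpr (Equiv.ext fun v => ?_))
  obtain ⟨a, ha, hav⟩ := hσ v
  rw [Subgroup.mem_bot.mp ha] at hav
  exact hav

end Orbitals

section Product

variable {V W : Type} {A : Subgroup (Perm V)} {B : Subgroup (Perm W)} {f : Perm V} {g : Perm W}

lemma mem_permProd_iff {σ : Perm (V × W)} :
    σ ∈ PermProd A B ↔ ∃ a ∈ A, ∃ b ∈ B, σ = prodCongr a b := by
  simp [PermProd, permProdHom, eq_comm, Subgroup.mem_prod, and_assoc]

lemma prodCongr_mem_permProd_iff [Nonempty V] [Nonempty W] :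
    prodCongr f g ∈ PermProd A B ↔ f ∈ A ∧ g ∈ B := by
  refine ⟨fun h => ?_, fun ⟨hf, hg⟩ => mem_permProd_iff.mpr ⟨f, hf, g, hg, rfl⟩⟩
  obtain ⟨a, ha, b, hb, hab⟩ := mem_permProd_iff.mp h
  obtain ⟨v₀⟩ := ‹Nonempty V›
  obtain ⟨w₀⟩ := ‹Nonempty W›
  have hf : f = a := Equiv.ext fun v => congrArg Prod.fst (congrFun (congrArg (⇑) hab) (v, w₀))
  have hg : g = b := Equiv.ext fun w => congrArg Prod.snd (congrFun (congrArg (⇑) hab) (v₀, w))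
  exact ⟨hf ▸ ha, hg ▸ hb⟩

/-- The condition for `prodCongr f g` to lie in the GR-closure of `A × B`
(`prodCongr_mem_grClosure_permProd_iff`). -/
def Coherent (A : Subgroup (Perm V)) (B : Subgroup (Perm W)) (f : Perm V) (g : Perm W) : Prop :=
  ∀ p q : V × W, p ≠ q →
    ((f p.1, f q.1) ∈ Orbital A p.1 q.1 ∧ (g p.2, g q.2) ∈ Orbital B p.2 q.2) ∨
      ((f p.1, f q.1) ∈ Orbital A q.1 p.1 ∧ (g p.2, g q.2) ∈ Orbital B q.2 p.2)

lemma Coherent.symm (h : Coherent A B f g) : Coherent B A g f :=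
  fun p q hpq => (h p.swap q.swap (Prod.swap_injective.ne hpq)).imp And.symm And.symm

lemma prodCongr_mem_grClosure_permProd_iff :
    prodCongr f g ∈ grClosure (PermProd A B) ↔ Coherent A B f g := by
  refine forall₂_congr fun p q => imp_congr_right fun _ => ?_
  simp only [mem_permProd_iff]
  constructor
  · rintro ⟨_, ⟨a, ha, b, hb, rfl⟩, h⟩
    rcases Sym2.eq_iff.mp h with h | h <;> simp only [prodCongr_apply, Prod.map, Prod.mk.injEq] at h
    · exact Or.inl ⟨⟨a, ha, by rw [h.1.1, h.2.1]⟩, ⟨b, hb, by rw [h.1.2, h.2.2]⟩⟩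
    · exact Or.inr ⟨⟨a, ha, by rw [h.1.1, h.2.1]⟩, ⟨b, hb, by rw [h.1.2, h.2.2]⟩⟩
  · rintro (⟨⟨a, ha, hf⟩, ⟨b, hb, hg⟩⟩ | ⟨⟨a, ha, hf⟩, ⟨b, hb, hg⟩⟩) <;>
      simp only [Prod.mk.injEq] at hf hg <;>
      refine ⟨prodCongr a b, ⟨a, ha, b, hb, rfl⟩, Sym2.eq_iff.mpr ?_⟩
    · exact Or.inl ⟨Prod.ext hf.1 hg.1, Prod.ext hf.2 hg.2⟩
    · exact Or.inr ⟨Prod.ext hf.1 hg.1, Prod.ext hf.2 hg.2⟩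

lemma fst_apply_eq_of_mem_grClosure_permProd {σ : Perm (V × W)}
    (hσ : σ ∈ grClosure (PermProd A B)) {p q : V × W} (hpq : p.1 = q.1) :
    (σ p).1 = (σ q).1 := by
  obtain rfl | hne := eq_or_ne p q
  · rfl
  obtain ⟨τ, hτ, h⟩ := hσ p q hne
  obtain ⟨a, -, b, -, rfl⟩ := mem_permProd_iff.mp hτ
  rcases Sym2.eq_iff.mp h with ⟨h₁, h₂⟩ | ⟨h₁, h₂⟩ <;> simp [h₁, h₂, hpq]

lemma snd_apply_eq_of_mem_grClosure_permProd {σ : Perm (V × W)}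
    (hσ : σ ∈ grClosure (PermProd A B)) {p q : V × W} (hpq : p.2 = q.2) :
    (σ p).2 = (σ q).2 := by
  obtain rfl | hne := eq_or_ne p q
  · rfl
  obtain ⟨τ, hτ, h⟩ := hσ p q hne
  obtain ⟨a, -, b, -, rfl⟩ := mem_permProd_iff.mp hτ
  rcases Sym2.eq_iff.mp h with ⟨h₁, h₂⟩ | ⟨h₁, h₂⟩ <;> simp [h₁, h₂, hpq]

lemma exists_eq_prodCongr_of_mem_grClosure_permProd [Nonempty V] [Nonempty W]
    {σ : Perm (V × W)} (hσ : σ ∈ grClosure (PermProd A B)) :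
    ∃ (f : Perm V) (g : Perm W), σ = prodCongr f g := by
  obtain ⟨v₀⟩ := ‹Nonempty V›
  obtain ⟨w₀⟩ := ‹Nonempty W›
  have hmap : ⇑σ = Prod.map (fun v => (σ (v, w₀)).1) (fun w => (σ (v₀, w)).2) :=
    funext fun p => Prod.ext (fst_apply_eq_of_mem_grClosure_permProd hσ rfl)
      (snd_apply_eq_of_mem_grClosure_permProd hσ rfl)
  obtain ⟨hF, hG⟩ := Prod.map_bijective.mp (hmap ▸ σ.bijective)
  exact ⟨ofBijective _ hF, ofBijective _ hG, Equiv.ext (congrFun hmap)⟩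

lemma isGR_permProd_iff [Nonempty V] [Nonempty W] :
    IsGR (PermProd A B) ↔ ∀ f g, Coherent A B f g → f ∈ A ∧ g ∈ B := by
  rw [isGR_iff]
  constructor
  · intro h f g hfg
    exact prodCongr_mem_permProd_iff.mp (h (prodCongr_mem_grClosure_permProd_iff.mpr hfg))
  · intro h σ hσ
    obtain ⟨f, g, rfl⟩ := exists_eq_prodCongr_of_mem_grClosure_permProd hσ
    exact prodCongr_mem_permProd_iff.mpr (h f g (prodCongr_mem_grClosure_permProd_iff.mp hσ))

namespace Coherent

lemma mem_orbitOf_left [Nontrivial W] (h : Coherent A B f g) (v : V) : f v ∈ OrbitOf A v := by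
  obtain ⟨w, w', hww⟩ := exists_pair_ne W
  rw [← mk_self_mem_orbital_iff]
  rcases h (v, w) (v, w') (fun hp => hww (congrArg Prod.snd hp)) with ⟨hf, -⟩ | ⟨hf, -⟩ <;>
    exact hf

lemma mem_grClosure_left [Nonempty W] (h : Coherent A B f g) : f ∈ grClosure A := by
  obtain ⟨w⟩ := ‹Nonempty W›
  exact mem_grClosure_iff.mpr fun v v' hvv =>
    (h (v, w) (v', w) fun hp => hvv (congrArg Prod.fst hp)).imp And.left And.left

lemma reversesOrOrbitals_left (h : Coherent A B f g) (hg : ¬ PreservesOrOrbitals B g) :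
    ReversesOrOrbitals A f := by
  obtain ⟨w, w', hww, hgw⟩ : ∃ w w', w ≠ w' ∧ (g w, g w') ∉ Orbital B w w' := by
    simpa [preservesOrOrbitals_iff] using hg
  intro v v' hvv
  exact ((h (v, w) (v', w') fun hp => hvv (congrArg Prod.fst hp)).resolve_left
    fun hstraight => hgw hstraight.2).1

lemma selfPaired_left (h : Coherent A B f g) (hf : f ∈ A) (hg : ¬ PreservesOrOrbitals B g) :
    ∀ v v' : V, v ≠ v' → SelfPaired A v v' :=
  fun v v' hvv => selfPaired_of_mem_orbital_swap hf (h.reversesOrOrbitals_left hg v v' hvv)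

lemma not_isGR_and_not_isI₂_left [Fintype V] [Nontrivial W] (h : Coherent A B f g)
    (hf : f ∉ A) : ¬ IsGR A ∧ ¬ IsI₂ A :=
  ⟨not_isGR_of_mem_grClosure h.mem_grClosure_left hf, not_isI₂_of_mem_orbitOf h.mem_orbitOf_left hf⟩

lemma pairsAllPairedOrbitals_left [Finite V] [Nonempty W] (h : Coherent A B f g)
    (hg : ¬ PreservesOrOrbitals B g) : PairsAllPairedOrbitals A f :=
  (reversesOrOrbitals_iff_pairsAllPairedOrbitals h.mem_grClosure_left).mp
    (h.reversesOrOrbitals_left hg)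

end Coherent

lemma coherent_one_right [Nontrivial V] (hf : PreservesOrOrbitals A f) : Coherent A B f 1 :=
  fun p q _ => Or.inl ⟨hf.mem_orbital p.1 q.1, mem_orbital_self p.2 q.2⟩

lemma coherent_one_left (hA : ∀ v v' : V, v ≠ v' → SelfPaired A v v') (hg : g ∈ grClosure B)
    (hg_orbit : ∀ w, g w ∈ OrbitOf B w) : Coherent A B 1 g := by
  intro p q _
  obtain heq | hne := eq_or_ne p.2 q.2
  · refine Or.inl ⟨mem_orbital_self _ _, ?_⟩
    rw [heq, mk_self_mem_orbital_iff]
    exact hg_orbit q.2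
  rcases mem_grClosure_iff.mp hg _ _ hne with hstraight | hcross
  · exact Or.inl ⟨mem_orbital_self _ _, hstraight⟩
  · refine Or.inr ⟨?_, hcross⟩
    obtain heq | hne := eq_or_ne p.1 q.1
    · rw [heq]
      exact mem_orbital_self _ _
    · exact hA _ _ hne ▸ mem_orbital_self _ _

lemma coherent_of_reversesOrOrbitals (hf : ReversesOrOrbitals A f)
    (hf_orbit : ∀ v, f v ∈ OrbitOf A v) (hg : ReversesOrOrbitals B g)
    (hg_orbit : ∀ w, g w ∈ OrbitOf B w) : Coherent A B f g :=
  fun p q _ => Or.inr ⟨hf.mem_orbital hf_orbit p.1 q.1, hg.mem_orbital hg_orbit p.2 q.2⟩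

lemma exists_not_mem_coherent_of_not_isDGR [Nontrivial V] (hA : ¬ IsDGR A) :
    ∃ f ∉ A, Coherent A B f 1 := by
  obtain ⟨f, hf, hfA⟩ : ∃ f, PreservesOrOrbitals A f ∧ f ∉ A := by simpa [isDGR_iff] using hA
  exact ⟨f, hfA, coherent_one_right hf⟩

lemma exists_not_mem_coherent_of_selfPaired [Fintype W] (hW : 2 ≤ Fintype.card W)
    (hA : ∀ v v' : V, v ≠ v' → SelfPaired A v v') (hB : ¬ IsGR B) (hIB : ¬ IsI₂ B) :
    ∃ g ∉ B, Coherent A B 1 g := by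
  obtain ⟨g, hg, hgB⟩ := Set.not_subset.mp (mt isGR_iff.mpr hB)
  have hg_orbit := mem_orbitOf_of_mem_grClosure (three_le_card_of_not_isGR hW hB hIB) hg
  exact ⟨g, hgB, coherent_one_left hA hg hg_orbit⟩

lemma coherent_of_pairsAllPairedOrbitals [Fintype V] [Fintype W]
    (hV : 2 ≤ Fintype.card V) (hW : 2 ≤ Fintype.card W)
    (hA : ¬ IsGR A) (hIA : ¬ IsI₂ A) (hB : ¬ IsGR B) (hIB : ¬ IsI₂ B)
    (hf : f ∈ grClosure A) (hf_pairs : PairsAllPairedOrbitals A f)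
    (hg : g ∈ grClosure B) (hg_pairs : PairsAllPairedOrbitals B g) : Coherent A B f g := by
  have hf_orbit := mem_orbitOf_of_mem_grClosure (three_le_card_of_not_isGR hV hA hIA) hf
  have hg_orbit := mem_orbitOf_of_mem_grClosure (three_le_card_of_not_isGR hW hB hIB) hg
  rw [← reversesOrOrbitals_iff_pairsAllPairedOrbitals hf] at hf_pairs
  rw [← reversesOrOrbitals_iff_pairsAllPairedOrbitals hg] at hg_pairs
  exact coherent_of_reversesOrOrbitals hf_pairs hf_orbit hg_pairs hg_orbit

end Product

/-- `A × B ∈ GR` except exactly in the cases: (i) `A ∉ DGR` or `B ∉ DGR`;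
(ii) one of the groups is in `GR` with all Or-orbitals self-paired while the
other is not in `GR ∪ {I₂}`; (iii) `A, B ∈ DGR \ (GR ∪ {I₂})` and there are
`a ∈ Ā \ A`, `b ∈ B̄ \ B` pairing all the pairs of paired Or-orbitals of `A`
and of `B`, respectively. -/
theorem isGR_prod_characterization {V W : Type} [Fintype V] [Fintype W]
    (A : Subgroup (Equiv.Perm V)) (B : Subgroup (Equiv.Perm W))
    (hV : 2 ≤ Fintype.card V) (hW : 2 ≤ Fintype.card W) :
    IsGR (PermProd A B) ↔
      ¬ ((¬ IsDGR A ∨ ¬ IsDGR B) ∨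
        ((IsGR A ∧ (∀ v₁ v₂ : V, v₁ ≠ v₂ → SelfPaired A v₁ v₂) ∧
            ¬ IsGR B ∧ ¬ IsI₂ B) ∨
         (IsGR B ∧ (∀ w₁ w₂ : W, w₁ ≠ w₂ → SelfPaired B w₁ w₂) ∧
            ¬ IsGR A ∧ ¬ IsI₂ A)) ∨
        (IsDGR A ∧ ¬ IsGR A ∧ ¬ IsI₂ A ∧ IsDGR B ∧ ¬ IsGR B ∧ ¬ IsI₂ B ∧
          (∃ a ∈ grClosure A, a ∉ A ∧ PairsAllPairedOrbitals A a) ∧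
          (∃ b ∈ grClosure B, b ∉ B ∧ PairsAllPairedOrbitals B b))) := by
  have := Fintype.one_lt_card_iff_nontrivial.mp hV
  have := Fintype.one_lt_card_iff_nontrivial.mp hW
  rw [isGR_permProd_iff]
  constructor
  · rintro hcoh ((hA | hB) | (⟨-, hA, hB, hIB⟩ | ⟨-, hB, hA, hIA⟩) |
      ⟨-, hA, hIA, -, hB, hIB, ⟨f, hf, hfA, hf_pairs⟩, ⟨g, hg, -, hg_pairs⟩⟩)
    · obtain ⟨f, hfA, h⟩ := exists_not_mem_coherent_of_not_isDGR (B := B) hA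
      exact hfA (hcoh f 1 h).1
    · obtain ⟨g, hgB, h⟩ := exists_not_mem_coherent_of_not_isDGR (B := A) hB
      exact hgB (hcoh 1 g h.symm).2
    · obtain ⟨g, hgB, h⟩ := exists_not_mem_coherent_of_selfPaired hW hA hB hIB
      exact hgB (hcoh 1 g h).2
    · obtain ⟨f, hfA, h⟩ := exists_not_mem_coherent_of_selfPaired hV hB hA hIA
      exact hfA (hcoh f 1 h.symm).1
    · exact hfA (hcoh f g (coherent_of_pairsAllPairedOrbitals hV hW hA hIA hB hIB
        hf hf_pairs hg hg_pairs)).1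
  · intro hcases f g h
    simp only [not_or, not_not] at hcases
    obtain ⟨⟨hDA, hDB⟩, ⟨hA_ii, hB_ii⟩, h_iii⟩ := hcases
    by_cases hf : PreservesOrOrbitals A f <;> by_cases hg : PreservesOrOrbitals B g
    · exact ⟨isDGR_iff.mp hDA f hf, isDGR_iff.mp hDB g hg⟩
    · have hA := h.selfPaired_left (isDGR_iff.mp hDA f hf) hg
      exact absurd ⟨isGR_of_isDGR_of_selfPaired hDA hA, hA,
        h.symm.not_isGR_and_not_isI₂_left (mt preservesOrOrbitals_of_mem hg)⟩ hA_ii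
    · have hB := h.symm.selfPaired_left (isDGR_iff.mp hDB g hg) hf
      exact absurd ⟨isGR_of_isDGR_of_selfPaired hDB hB, hB,
        h.not_isGR_and_not_isI₂_left (mt preservesOrOrbitals_of_mem hf)⟩ hB_ii
    · have hfA := mt preservesOrOrbitals_of_mem hf
      have hgB := mt preservesOrOrbitals_of_mem hg
      obtain ⟨hGA, hIA⟩ := h.not_isGR_and_not_isI₂_left hfA
      obtain ⟨hGB, hIB⟩ := h.symm.not_isGR_and_not_isI₂_left hgB
      exact absurd ⟨hDA, hGA, hIA, hDB, hGB, hIB, ⟨f, h.mem_grClosure_left, hfA,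
        h.pairsAllPairedOrbitals_left hg⟩, ⟨g, h.symm.mem_grClosure_left, hgB,
        h.symm.pairsAllPairedOrbitals_left hf⟩⟩ h_iii
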